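/- Let k ≥ 1 and let b : V(W_{2k+1}) → ℤ₃ satisfy ∑_{v} b(v) ≡ 0 (mod 3). If b(v) ≠ 0 for some vertex v of the odd wheel W_{2k+1}, then there is an orientation D of W_{2k+1} such that d⁺_D(x) − d⁻_D(x) ≡ b(x) (mod 3) for every vertex x. -/

import Mathlib

/-- A finite loopless multigraph: each edge has an ordered pair of distinct endpoints
(the ordering is immaterial; it is only used to describe orientations). -/
structure Multigraph : Type 1 where
  V : Type
  fintypeV : Fintype V
  decEqV : DecidableEq V
  E : Type
  fintypeE : Fintype E
  decEqE : DecidableEq E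
  ends : E → V × V
  loopless : ∀ e, (ends e).1 ≠ (ends e).2

attribute [instance] Multigraph.fintypeV Multigraph.decEqV Multigraph.fintypeE Multigraph.decEqE

namespace Multigraph

variable (G : Multigraph)

/-- Tail of an edge under an orientation `D` (`true` = directed from first to second end). -/
def tail (D : G.E → Bool) (e : G.E) : G.V := if D e then (G.ends e).1 else (G.ends e).2

/-- Head of an edge under an orientation `D`. -/
def head (D : G.E → Bool) (e : G.E) : G.V := if D e then (G.ends e).2 else (G.ends e).1

/-- Out-degree of `v` under orientation `D`. -/
def outDeg (D : G.E → Bool) (v : G.V) : ℕ := (Finset.univ.filter fun e => G.tail D e = v).card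

/-- In-degree of `v` under orientation `D`. -/
def inDeg (D : G.E → Bool) (v : G.V) : ℕ := (Finset.univ.filter fun e => G.head D e = v).card

/-- A modulo 3-orientation. -/
def HasMod3Orientation : Prop :=
  ∃ D : G.E → Bool, ∀ v : G.V, ((G.outDeg D v : ZMod 3) = (G.inDeg D v : ZMod 3))

/-- A nowhere-zero 3-flow. -/
def HasNowhereZero3Flow : Prop :=
  ∃ (D : G.E → Bool) (f : G.E → ℤ),
    (∀ e, 1 ≤ |f e| ∧ |f e| ≤ 2) ∧
    (∀ v : G.V,
      (∑ e : G.E, if G.tail D e = v then f e else 0) =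
      (∑ e : G.E, if G.head D e = v then f e else 0))

/-- `ℤ₃`-connectivity. -/
def Z3Connected : Prop :=
  ∀ b : G.V → ZMod 3, (∑ v : G.V, b v) = 0 →
    ∃ D : G.E → Bool, ∀ v : G.V, (G.outDeg D v : ZMod 3) - (G.inDeg D v : ZMod 3) = b v

/-- Degree of a vertex. -/
def degree (v : G.V) : ℕ :=
  (Finset.univ.filter fun e => (G.ends e).1 = v ∨ (G.ends e).2 = v).card

/-- Minimum degree `δ(G)`. -/
noncomputable def minDegree : ℕ := sInf (Set.range G.degree)

/-- The edge cut `∂_G(S)`. -/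
def cut (S : Finset G.V) : Finset G.E :=
  Finset.univ.filter fun e =>
    ((G.ends e).1 ∈ S ∧ (G.ends e).2 ∉ S) ∨ ((G.ends e).2 ∈ S ∧ (G.ends e).1 ∉ S)

def Adjacent (u v : G.V) : Prop :=
  ∃ e : G.E, G.ends e = (u, v) ∨ G.ends e = (v, u)

def IsIndepSet (S : Finset G.V) : Prop :=
  ∀ u ∈ S, ∀ v ∈ S, u ≠ v → ¬ G.Adjacent u v

/-- The independence number `α(G)`. -/
noncomputable def indepNum : ℕ := sSup {n : ℕ | ∃ S : Finset G.V, G.IsIndepSet S ∧ S.card = n}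

def FiveEdgeConnected : Prop :=
  ∀ S : Finset G.V, S.Nonempty → S ≠ Finset.univ → 5 ≤ (G.cut S).card

/-- Every odd edge cut has at least 5 edges. -/
def Odd5EdgeConnected : Prop :=
  ∀ S : Finset G.V, Odd (G.cut S).card → 5 ≤ (G.cut S).card

/-- `G` contains `K₄` as a subgraph. -/
def ContainsK4 : Prop :=
  ∃ a b c d : G.V, a ≠ b ∧ a ≠ c ∧ a ≠ d ∧ b ≠ c ∧ b ≠ d ∧ c ≠ d ∧
    G.Adjacent a b ∧ G.Adjacent a c ∧ G.Adjacent a d ∧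
    G.Adjacent b c ∧ G.Adjacent b d ∧ G.Adjacent c d

/-- The neighbourhood `N(X)`: vertices outside `X` with a neighbour in `X`. -/
noncomputable def neighborFinset (X : Finset G.V) : Finset G.V := by
  classical
  exact Finset.univ.filter fun y => y ∉ X ∧ ∃ x ∈ X, G.Adjacent x y

/-- Induced subgraph on a vertex set `S`. -/
def induce (S : Finset G.V) : Multigraph where
  V := {v // v ∈ S}
  fintypeV := inferInstance
  decEqV := inferInstance
  E := {e : G.E // (G.ends e).1 ∈ S ∧ (G.ends e).2 ∈ S}
  fintypeE := inferInstance
  decEqE := inferInstance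
  ends := fun e => (⟨(G.ends e.1).1, e.2.1⟩, ⟨(G.ends e.1).2, e.2.2⟩)
  loopless := fun e h => G.loopless e.1 (congrArg Subtype.val h)

/-- The relation identifying the two ends of each edge in `F`. -/
def contractRel (F : Set G.E) (x y : G.V) : Prop :=
  ∃ e ∈ F, G.ends e = (x, y) ∨ G.ends e = (y, x)

/-- Contraction of a set `F` of edges: identify endpoints of edges of `F`
(via the equivalence closure), delete the edges of `F` and all resulting loops. -/
noncomputable def contractEdges (F : Set G.E) : Multigraph := by
  classical
  exact
    { V := Quot (G.contractRel F)
      fintypeV := Fintype.ofSurjective (Quot.mk _) (fun q => Quot.inductionOn q fun a => ⟨a, rfl⟩)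
      decEqV := Classical.decEq _
      E := {e : G.E // e ∉ F ∧
            Quot.mk (G.contractRel F) (G.ends e).1 ≠ Quot.mk (G.contractRel F) (G.ends e).2}
      fintypeE := Subtype.fintype _
      decEqE := Classical.decEq _
      ends := fun e => (Quot.mk _ (G.ends e.1).1, Quot.mk _ (G.ends e.1).2)
      loopless := fun e => e.2.2 }

end Multigraph

/-- A subgraph of a multigraph. -/
structure Multigraph.Subgraph (G : Multigraph) where
  verts : Finset G.V
  edges : Finset G.E
  ends_mem : ∀ e ∈ edges, (G.ends e).1 ∈ verts ∧ (G.ends e).2 ∈ verts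

namespace Multigraph

/-- A subgraph as a multigraph in its own right. -/
def Subgraph.toMultigraph {G : Multigraph} (H : G.Subgraph) : Multigraph where
  V := {v // v ∈ H.verts}
  fintypeV := inferInstance
  decEqV := inferInstance
  E := {e // e ∈ H.edges}
  fintypeE := inferInstance
  decEqE := inferInstance
  ends := fun e => (⟨(G.ends e.1).1, (H.ends_mem e.1 e.2).1⟩, ⟨(G.ends e.1).2, (H.ends_mem e.1 e.2).2⟩)
  loopless := fun e h => G.loopless e.1 (congrArg Subtype.val h)

/-- `G` is `⟨ℤ₃⟩`-reduced: it has no `ℤ₃`-connected subgraph with at least two vertices. -/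
def Z3Reduced (G : Multigraph) : Prop :=
  ∀ H : G.Subgraph, H.toMultigraph.Z3Connected → H.verts.card ≤ 1

/-- The contraction `G/H` of a subgraph. -/
noncomputable def contractSubgraph (G : Multigraph) (H : G.Subgraph) : Multigraph :=
  G.contractEdges {e | e ∈ H.edges}

/-- The `⟨ℤ₃⟩`-reduction of `G`: contract (the edges of) all maximal `ℤ₃`-connected
subgraphs of `G`. -/
noncomputable def reduction (G : Multigraph) : Multigraph :=
  G.contractEdges {e | ∃ H : G.Subgraph, H.toMultigraph.Z3Connected ∧ e ∈ H.edges}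

end Multigraph

/-- `r(n)`: the maximum number of edges of a `⟨ℤ₃⟩`-reduced graph on `n` vertices. -/
noncomputable def edgeMaxReduced (n : ℕ) : ℕ :=
  sSup {m : ℕ | ∃ G : Multigraph, G.Z3Reduced ∧ Fintype.card G.V = n ∧ Fintype.card G.E = m}

/-- The complete graph `K_n`. -/
def completeK (n : ℕ) : Multigraph where
  V := Fin n
  fintypeV := inferInstance
  decEqV := inferInstance
  E := {p : Fin n × Fin n // p.1 < p.2}
  fintypeE := inferInstance
  decEqE := inferInstance
  ends := fun p => p.1
  loopless := fun p => Fin.ne_of_lt p.2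

private theorem fin_succ_ne {n : ℕ} (hn : 2 ≤ n) (i : Fin n)
    (hv : (i : ℕ) = ((i : ℕ) + 1) % n) : False := by
  have hi := i.isLt
  by_cases hlt : (i : ℕ) + 1 < n
  · rw [Nat.mod_eq_of_lt hlt] at hv; omega
  · have he : (i : ℕ) + 1 = n := by omega
    rw [he, Nat.mod_self] at hv; omega

/-- The cycle `C_n` (for `n ≥ 2`); `C_2` is a digon. -/
def cycleGraph (n : ℕ) (hn : 2 ≤ n) : Multigraph where
  V := Fin n
  fintypeV := inferInstance
  decEqV := inferInstance
  E := Fin n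
  fintypeE := inferInstance
  decEqE := inferInstance
  ends := fun i => (i, ⟨((i : ℕ) + 1) % n, Nat.mod_lt _ (by omega)⟩)
  loopless := fun i h => fin_succ_ne hn i (congrArg Fin.val h)

/-- The wheel `W_n` (for `n ≥ 2`): an `n`-cycle on `some 0, …, some (n-1)` together
with a center `none` joined to every vertex of the cycle. -/
def wheelGraph (n : ℕ) (hn : 2 ≤ n) : Multigraph where
  V := Option (Fin n)
  fintypeV := inferInstance
  decEqV := inferInstance
  E := Fin n ⊕ Fin n
  fintypeE := inferInstance
  decEqE := inferInstance
  ends := fun e => match e with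
    | .inl i => (some i, some ⟨((i : ℕ) + 1) % n, Nat.mod_lt _ (by omega)⟩)
    | .inr i => (none, some i)
  loopless := by
    rintro (i | i) h
    · exact fin_succ_ne hn i (congrArg Fin.val (Option.some_injective _ h))
    · exact nomatch (show (none : Option (Fin n)) = some i from h)

/-!
In `ℤ₃` the nonzero elements are exactly `±1`, so an orientation with net outflow `b` is the same
thing as a nowhere-zero `ℤ₃`-valued function on the edges with boundary `b`. On a wheel, pick a rim
vertex `j` with `b j ≠ 0` (one exists since `∑ b = 0` and `b ≠ 0`). Put `x j = b j` on the rim edge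
leaving `j`, then go around the rim choosing each `x i ≠ 0` with `x i - x (i - 1) ≠ b i`; of the two
nonzero values one always works, and at `j` the condition holds because `x (j - 1) ≠ 0`. The spoke
at `i` then carries `x i - x (i - 1) - b i ≠ 0`, and the condition at the centre is `∑ b = 0`.
-/

namespace Multigraph

variable (G : Multigraph)

/-- The net outflow of `f` at `v`, each edge `e` read as directed from `(ends e).1` to
`(ends e).2`. -/
def boundary {R : Type*} [AddCommGroup R] (f : G.E → R) (v : G.V) : R :=
  ∑ e, ((if (G.ends e).1 = v then f e else 0) - (if (G.ends e).2 = v then f e else 0))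

theorem outDeg_sub_inDeg_eq_boundary {R : Type*} [Ring R] (D : G.E → Bool) (v : G.V) :
    (G.outDeg D v : R) - G.inDeg D v = G.boundary (fun e => if D e then 1 else -1) v := by
  rw [outDeg, inDeg, Finset.card_filter, Finset.card_filter]
  push_cast
  rw [boundary, ← Finset.sum_sub_distrib]
  refine Finset.sum_congr rfl fun e _ => ?_
  have := G.loopless e
  unfold tail head
  cases D e <;> split_ifs <;> simp_all

theorem exists_orientation_of_boundary {f : G.E → ZMod 3} (hf : ∀ e, f e ≠ 0) :
    ∃ D : G.E → Bool, ∀ v, (G.outDeg D v : ZMod 3) - G.inDeg D v = G.boundary f v := by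
  have sign_eq : ∀ a : ZMod 3, a ≠ 0 → (if a = 1 then 1 else -1) = a := by decide
  refine ⟨fun e => decide (f e = 1), fun v => ?_⟩
  simp only [outDeg_sub_inDeg_eq_boundary, decide_eq_true_eq, sign_eq _ (hf _)]

end Multigraph

theorem ZMod.exists_ne_zero_sub_ne (a c : ZMod 3) : ∃ a', a' ≠ 0 ∧ a' - a ≠ c := by
  revert a c; decide

theorem Fin.exists_ne_zero_sub_pred_ne_of_apply_zero_ne {m : ℕ} (c : Fin (m + 1) → ZMod 3)
    (hc : c 0 ≠ 0) :
    ∃ x : Fin (m + 1) → ZMod 3, (∀ i, x i ≠ 0) ∧ ∀ i, x i - x (i - 1) ≠ c i := by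
  choose next next_ne_zero next_sub_ne using ZMod.exists_ne_zero_sub_ne
  let x : Fin (m + 1) → ZMod 3 :=
    Fin.induction (motive := fun _ => ZMod 3) (c 0) fun i a => next a (c i.succ)
  have x_ne_zero : ∀ i, x i ≠ 0 := Fin.cases hc fun i => next_ne_zero _ _
  refine ⟨x, x_ne_zero, Fin.cases ?_ fun i => ?_⟩
  · simpa [x] using x_ne_zero (0 - 1)
  · rw [← Fin.coeSucc_eq_succ, add_sub_cancel_right, Fin.coeSucc_eq_succ]
    exact next_sub_ne (x i.castSucc) (c i.succ)

theorem Fin.exists_ne_zero_sub_pred_ne {m : ℕ} (c : Fin (m + 1) → ZMod 3)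
    (hc : ∃ j, c j ≠ 0) :
    ∃ x : Fin (m + 1) → ZMod 3, (∀ i, x i ≠ 0) ∧ ∀ i, x i - x (i - 1) ≠ c i := by
  obtain ⟨j, hj⟩ := hc
  obtain ⟨x, x_ne_zero, hx⟩ :=
    Fin.exists_ne_zero_sub_pred_ne_of_apply_zero_ne (fun i => c (i + j)) (by simpa using hj)
  refine ⟨fun i => x (i - j), fun i => x_ne_zero _, fun i => ?_⟩
  simpa [sub_right_comm i 1 j] using hx (i - j)

section Wheel

variable {m : ℕ} (hn : 2 ≤ m + 1)

theorem wheelGraph_ends :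
    (wheelGraph (m + 1) hn).ends =
      Sum.elim (fun i => (some i, some (i + 1))) fun i => (none, some i) := by
  funext e
  rcases e with i | i
  · simp only [wheelGraph, Sum.elim_inl, Prod.mk.injEq, Option.some.injEq, true_and]
    ext
    simp [Fin.val_add]
  · rfl

theorem wheelGraph_sum_edges {R : Type*} [AddCommMonoid R] (F : (wheelGraph (m + 1) hn).E → R) :
    ∑ e, F e = ∑ i, F (.inl i) + ∑ i, F (.inr i) :=
  Fintype.sum_sum_type F

theorem wheelGraph_boundary_none {R : Type*} [AddCommGroup R]
    (f : (wheelGraph (m + 1) hn).E → R) :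
    (wheelGraph (m + 1) hn).boundary f none = ∑ i, f (.inr i) := by
  simp only [Multigraph.boundary]
  rw [wheelGraph_ends, wheelGraph_sum_edges]
  simp only [Sum.elim_inl, Sum.elim_inr, reduceCtorEq, ↓reduceIte, sub_self, sub_zero,
    Finset.sum_const_zero, zero_add]
  exact Finset.sum_congr rfl fun _ _ => if_pos rfl

theorem wheelGraph_boundary_some {R : Type*} [AddCommGroup R]
    (f : (wheelGraph (m + 1) hn).E → R) (i : Fin (m + 1)) :
    (wheelGraph (m + 1) hn).boundary f (some i) = f (.inl i) - f (.inl (i - 1)) - f (.inr i) := by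
  -- `Option.some_inj` does not fire by itself: `(wheelGraph _ _).V` is not reducibly `Option _`.
  have some_inj (a b : Fin (m + 1)) : @Eq (wheelGraph (m + 1) hn).V (some a) (some b) ↔ a = b :=
    Option.some_inj
  simp only [Multigraph.boundary]
  rw [wheelGraph_ends, wheelGraph_sum_edges]
  simp [some_inj, ← eq_sub_iff_add_eq]

theorem wheelGraph_exists_orientation (b : (wheelGraph (m + 1) hn).V → ZMod 3)
    (hsum : ∑ v, b v = 0) (hne : ∃ v, b v ≠ 0) :
    ∃ D : (wheelGraph (m + 1) hn).E → Bool,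
      ∀ v, ((wheelGraph (m + 1) hn).outDeg D v : ZMod 3) - (wheelGraph (m + 1) hn).inDeg D v =
        b v := by
  have hsum' : b none = -∑ i, b (some i) :=
    eq_neg_of_add_eq_zero_left ((Fintype.sum_option b).symm.trans hsum)
  have rim_ne : ∃ j, b (some j) ≠ 0 := by
    by_contra! h
    obtain ⟨_ | i, hv⟩ := hne
    · simp [hsum', h] at hv
    · exact hv (h i)
  obtain ⟨x, x_ne_zero, hx⟩ := Fin.exists_ne_zero_sub_pred_ne _ rim_ne
  let f : (wheelGraph (m + 1) hn).E → ZMod 3 :=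
    Sum.elim x fun i => x i - x (i - 1) - b (some i)
  have f_ne_zero : ∀ e, f e ≠ 0 := by
    rintro (i | i)
    · exact x_ne_zero i
    · exact sub_ne_zero.mpr (hx i)
  obtain ⟨D, hD⟩ := (wheelGraph (m + 1) hn).exists_orientation_of_boundary f_ne_zero
  refine ⟨D, fun v => (hD v).trans ?_⟩
  rcases v with _ | i
  · rw [wheelGraph_boundary_none, hsum']
    have rotate : ∑ i, x (i - 1) = ∑ i, x i := (Equiv.subRight 1).sum_comp x
    simp only [f, Sum.elim_inr, Finset.sum_sub_distrib, rotate, sub_self, zero_sub]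
  · rw [wheelGraph_boundary_some]
    simp [f]

end Wheel

/-- For an odd wheel `W_{2k+1}` (`k ≥ 1`) and a zero-sum `ℤ₃`-boundary `b` which is not
identically zero, there is an orientation realizing `b`. -/
theorem oddWheel_orientation (k : ℕ) (hk : 1 ≤ k)
    (b : (wheelGraph (2 * k + 1) (by omega)).V → ZMod 3)
    (hsum : (∑ v, b v) = 0) (hne : ∃ v, b v ≠ 0) :
    ∃ D : (wheelGraph (2 * k + 1) (by omega)).E → Bool,
      ∀ x, ((wheelGraph (2 * k + 1) (by omega)).outDeg D x : ZMod 3) -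
        ((wheelGraph (2 * k + 1) (by omega)).inDeg D x : ZMod 3) = b x :=
  wheelGraph_exists_orientation _ b hsum hne
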